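/- The welded band-pass move wBP w-generates the sign-reversal move SR: every instance of SR can be realized by a finite sequence of wBP moves and welded Reidemeister moves. -/

import Mathlib

/-!
# Gauss diagrams, welded Reidemeister moves and local moves

A Gauss diagram on `n` ordered, oriented strands is presented by a finite set of
signed arrows, each with a tail and a head lying on the strands.  We encode it
as a function assigning to each strand the ordered list of the arrow-endpoint
"letters" lying on it; a letter records the (abstract) identifier of its arrow,
whether it is the head or the tail of that arrow, and the sign of that arrow.
Diagrams are considered up to injective renaming of identifiers (`Rename`).
-/

/-- An endpoint of an arrow of a Gauss diagram: the identifier `id` of its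
arrow, whether it is the head (`isHead = true`) or the tail of that arrow, and
the sign of that arrow (`true` = positive). -/
structure Letter where
  id : ℕ
  isHead : Bool
  sign : Bool
deriving DecidableEq, Repr

/-- A Gauss diagram on `n` ordered oriented strands: for each strand, the
ordered list of arrow endpoints lying on it (read along the orientation). -/
abbrev GaussD (n : ℕ) := Fin n → List Letter

namespace GaussD

variable {n : ℕ}

/-- The tail letter of the arrow `a` with sign `ε`. -/
def tailL (a : ℕ) (ε : Bool) : Letter := ⟨a, false, ε⟩

/-- The head letter of the arrow `a` with sign `ε`. -/
def headL (a : ℕ) (ε : Bool) : Letter := ⟨a, true, ε⟩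

/-- All letters of a diagram. -/
def lettersOf (D : GaussD n) : List Letter :=
  (List.finRange n).foldr (fun i acc => D i ++ acc) []

/-- The arrow identifier `a` occurs in `D`. -/
def usesId (D : GaussD n) (a : ℕ) : Prop := ∃ l ∈ lettersOf D, l.id = a

/-- Well-formedness: every arrow identifier occurring in `D` occurs exactly
twice, once as a head and once as a tail, both with the same sign.  Well-formed
functions `Fin n → List Letter` are exactly the combinatorial Gauss diagrams. -/
def Wf (D : GaussD n) : Prop :=
  ∀ a : ℕ, (lettersOf D).filter (fun l => l.id == a) = [] ∨
    ∃ ε : Bool, ((lettersOf D).filter (fun l => l.id == a)).Perm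
      [Letter.mk a true ε, Letter.mk a false ε]

/-- Injective renaming of arrow identifiers (Gauss diagrams are considered up
to such renamings). -/
def Rename (D D' : GaussD n) : Prop :=
  ∃ f : ℕ → ℕ, Function.Injective f ∧
    ∀ i, D' i = (D i).map (fun l => Letter.mk (f l.id) l.isHead l.sign)

/-- `D'` is obtained from `D` by replacing one contiguous block `p` of letters
by the block `q`, somewhere on one strand. -/
def ReplaceBlock (D D' : GaussD n) (p q : List Letter) : Prop :=
  ∃ (i : Fin n) (u v : List Letter),
    D i = u ++ p ++ v ∧ D' i = u ++ q ++ v ∧ ∀ j, j ≠ i → D' j = D j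

/-- Exchange the two adjacent letters `p`, `q` (in this order in `D`). -/
def SwapAdj (D D' : GaussD n) (p q : Letter) : Prop :=
  ReplaceBlock D D' [p, q] [q, p]

/-- Exchange adjacent letters `p`, `q`, occurring in the order prescribed by `o`. -/
def SwapAdjO (D D' : GaussD n) (o : Bool) (p q : Letter) : Prop :=
  if o then SwapAdj D D' p q else SwapAdj D D' q p

/-- The two-letter block `[p, q]` or `[q, p]`, according to `o`. -/
def pairL (o : Bool) (p q : Letter) : List Letter := if o then [p, q] else [q, p]

/-- Replace the letter `p` by `p'` and the letter `q` by `q'` in place, at two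
sites lying on one single strand. -/
def RepTwoSame (D D' : GaussD n) (p p' q q' : Letter) : Prop :=
  ∃ (i : Fin n) (u v w : List Letter),
    ((D i = u ++ p :: v ++ q :: w ∧ D' i = u ++ p' :: v ++ q' :: w) ∨
     (D i = u ++ q :: v ++ p :: w ∧ D' i = u ++ q' :: v ++ p' :: w)) ∧
    ∀ j, j ≠ i → D' j = D j

/-- Replace the letter `p` by `p'` and the letter `q` by `q'` in place, at two
sites of the diagram (on one strand or on two different strands). -/
def RepTwo (D D' : GaussD n) (p p' q q' : Letter) : Prop :=
  RepTwoSame D D' p p' q q' ∨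
  ∃ (i j : Fin n), i ≠ j ∧ ∃ u v u' v',
    D i = u ++ p :: v ∧ D' i = u ++ p' :: v ∧
    D j = u' ++ q :: v' ∧ D' j = u' ++ q' :: v' ∧
    ∀ k, k ≠ i → k ≠ j → D' k = D k

/-- Delete the letters `p` and `q`, at two sites of the diagram. -/
def DelTwo (D D' : GaussD n) (p q : Letter) : Prop :=
  (∃ (i : Fin n) (u v w : List Letter),
    (D i = u ++ p :: v ++ q :: w ∨ D i = u ++ q :: v ++ p :: w) ∧
    D' i = u ++ v ++ w ∧ ∀ j, j ≠ i → D' j = D j) ∨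
  ∃ (i j : Fin n), i ≠ j ∧ ∃ u v u' v',
    D i = u ++ p :: v ∧ D' i = u ++ v ∧
    D j = u' ++ q :: v' ∧ D' j = u' ++ v' ∧
    ∀ k, k ≠ i → k ≠ j → D' k = D k

/-- Delete the two contiguous blocks `p` and `q`. -/
def DelTwoBlocks (D D' : GaussD n) (p q : List Letter) : Prop :=
  (∃ (i : Fin n) (u v w : List Letter),
    (D i = u ++ p ++ v ++ q ++ w ∨ D i = u ++ q ++ v ++ p ++ w) ∧
    D' i = u ++ v ++ w ∧ ∀ j, j ≠ i → D' j = D j) ∨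
  ∃ (i j : Fin n), i ≠ j ∧ ∃ u v u' v',
    D i = u ++ p ++ v ∧ D' i = u ++ v ∧
    D j = u' ++ q ++ v' ∧ D' j = u' ++ v' ∧
    ∀ k, k ≠ i → k ≠ j → D' k = D k

/-! ## Welded Reidemeister moves (Gauss diagram versions) -/

/-- R1: delete (or, symmetrically, insert) an arrow whose two endpoints are
adjacent on a strand. -/
def IsR1 (D D' : GaussD n) : Prop :=
  ∃ (a : ℕ) (ε o : Bool),
    ReplaceBlock D D' (pairL o (headL a ε) (tailL a ε)) [] ∧ ¬ usesId D' a

/-- R2: delete (or insert) two arrows with opposite signs whose tails are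
adjacent and whose heads are adjacent. -/
def IsR2 (D D' : GaussD n) : Prop :=
  ∃ (a b : ℕ) (ε o₁ o₂ : Bool), a ≠ b ∧ ¬ usesId D' a ∧ ¬ usesId D' b ∧
    DelTwoBlocks D D' (pairL o₁ (tailL a ε) (tailL b (!ε)))
      (pairL o₂ (headL a ε) (headL b (!ε)))

/-- R3 (with its sign condition): three arrows `a : x→y`, `b : x→z`, `c : y→z`
(tails = overpasses) form a triangle over three pieces of strands `x`, `y`, `z`;
on each piece the two endpoints are adjacent and are exchanged simultaneously.
The booleans `ox, oy, oz` record the order of the two endpoints on each piece,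
and the sign conditions `ox ⊕ oy = εb ⊕ εc`, `oy ⊕ oz = εa ⊕ εb` characterize
the planar-realizable triple-point configurations. -/
def IsR3 (D D' : GaussD n) : Prop :=
  ∃ (a b c : ℕ) (εa εb εc ox oy oz : Bool) (D₁ D₂ : GaussD n),
    a ≠ b ∧ a ≠ c ∧ b ≠ c ∧
    Bool.xor ox oy = Bool.xor εb εc ∧ Bool.xor oy oz = Bool.xor εa εb ∧
    SwapAdjO D D₁ ox (tailL a εa) (tailL b εb) ∧
    SwapAdjO D₁ D₂ oy (headL a εa) (tailL c εc) ∧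
    SwapAdjO D₂ D' oz (headL b εb) (headL c εc)

/-- OC (over-commute): exchange two tails which are adjacent on a strand. -/
def IsOC (D D' : GaussD n) : Prop :=
  ∃ p q : Letter, p.isHead = false ∧ q.isHead = false ∧ SwapAdj D D' p q

/-- A welded Reidemeister move: renaming (isotopy), R1, R2, R3, or OC. -/
def WeldedMove (D D' : GaussD n) : Prop :=
  Rename D D' ∨ IsR1 D D' ∨ IsR2 D D' ∨ IsR3 D D' ∨ IsOC D D'

/-! ## Local moves -/

/-- UC (under-commute): exchange two heads which are adjacent on a strand. -/
def IsUC (D D' : GaussD n) : Prop :=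
  ∃ p q : Letter, p.isHead = true ∧ q.isHead = true ∧ SwapAdj D D' p q

/-- F (fused move): exchange a tail and a head of two *different* arrows when
they are adjacent on a strand. -/
def IsF (D D' : GaussD n) : Prop :=
  ∃ p q : Letter, p.isHead ≠ q.isHead ∧ p.id ≠ q.id ∧ SwapAdj D D' p q

/-- V (virtualization): delete (or insert) one arrow. -/
def IsV (D D' : GaussD n) : Prop :=
  ∃ (a : ℕ) (ε : Bool), DelTwo D D' (headL a ε) (tailL a ε) ∧ ¬ usesId D' a

/-- SV (self-virtualization): delete (or insert) one self-arrow, i.e. an arrow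
with both endpoints on the same strand. -/
def IsSV (D D' : GaussD n) : Prop :=
  ∃ (a : ℕ) (ε : Bool) (i : Fin n) (u v w : List Letter),
    (D i = u ++ headL a ε :: v ++ tailL a ε :: w ∨
     D i = u ++ tailL a ε :: v ++ headL a ε :: w) ∧
    D' i = u ++ v ++ w ∧ (∀ j, j ≠ i → D' j = D j) ∧ ¬ usesId D' a

/-- CC (crossing change): reverse both the orientation and the sign of one
arrow (its head becomes its tail and vice versa, in place). -/
def IsCC (D D' : GaussD n) : Prop :=
  ∃ (a : ℕ) (ε : Bool),
    RepTwo D D' (headL a ε) (tailL a (!ε)) (tailL a ε) (headL a (!ε))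

/-- SC (self-crossing change): crossing change on a self-arrow. -/
def IsSC (D D' : GaussD n) : Prop :=
  ∃ (a : ℕ) (ε : Bool),
    RepTwoSame D D' (headL a ε) (tailL a (!ε)) (tailL a ε) (headL a (!ε))

/-- VC (virtual conjugation): reverse the orientation of one arrow, keeping its
sign. -/
def IsVC (D D' : GaussD n) : Prop :=
  ∃ (a : ℕ) (ε : Bool),
    RepTwo D D' (headL a ε) (tailL a ε) (tailL a ε) (headL a ε)

/-- SR (sign reversal): reverse the sign of one arrow, keeping its orientation. -/
def IsSR (D D' : GaussD n) : Prop :=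
  ∃ (a : ℕ) (ε : Bool),
    RepTwo D D' (headL a ε) (headL a (!ε)) (tailL a ε) (tailL a (!ε))

/-- Δ (Delta move of Murakami–Nakanishi, Gauss diagram version with its sign
condition): three arrows `a : x→y`, `b : y→z`, `c : z→x` form a cyclic triangle
over three pieces of strands; on each piece the two endpoints are adjacent and
are exchanged simultaneously.  The booleans `ox, oy, oz` record the order of
the two endpoints on each piece and the sign conditions characterize the
planar-realizable triangle configurations. -/
def IsDelta (D D' : GaussD n) : Prop :=
  ∃ (a b c : ℕ) (εa εb εc ox oy oz : Bool) (D₁ D₂ : GaussD n),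
    a ≠ b ∧ a ≠ c ∧ b ≠ c ∧
    Bool.xor ox oy = !(Bool.xor εb εc) ∧ Bool.xor oy oz = !(Bool.xor εa εc) ∧
    SwapAdjO D D₁ ox (tailL a εa) (headL c εc) ∧
    SwapAdjO D₁ D₂ oy (headL a εa) (tailL b εb) ∧
    SwapAdjO D₂ D' oz (tailL c εc) (headL b εb)

/-- BP (unoriented band-pass move, Gauss diagram version with its sign
condition): two bands, with strand pieces `a1, a2` resp. `b1, b2`, cross each
other, band `a` passing over band `b`: this gives four arrows
`pᵢⱼ : aᵢ → bⱼ` with signs `ε·αᵢ·βⱼ` (where `αᵢ, βⱼ` are the orientations of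
the pieces relative to the bands and `ε` the sign of the band crossing), the
two tails on each `aᵢ` being adjacent and the two heads on each `bⱼ` being
adjacent, with orders governed by `g, h`.  The move lets band `a` pass under
band `b` instead: all four arrows are reversed and their signs are changed,
positions being kept. -/
def IsBP (D D' : GaussD n) : Prop :=
  ∃ (p11 p12 p21 p22 : ℕ) (ε α1 α2 β1 β2 g h : Bool) (D₁ D₂ D₃ : GaussD n),
    p11 ≠ p12 ∧ p11 ≠ p21 ∧ p11 ≠ p22 ∧ p12 ≠ p21 ∧ p12 ≠ p22 ∧ p21 ≠ p22 ∧
    (let e11 := Bool.xor ε (Bool.xor α1 β1)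
     let e12 := Bool.xor ε (Bool.xor α1 β2)
     let e21 := Bool.xor ε (Bool.xor α2 β1)
     let e22 := Bool.xor ε (Bool.xor α2 β2)
     ReplaceBlock D D₁ (pairL (Bool.xor α1 g) (tailL p11 e11) (tailL p12 e12))
       (pairL (Bool.xor α1 g) (headL p11 (!e11)) (headL p12 (!e12))) ∧
     ReplaceBlock D₁ D₂ (pairL (Bool.xor α2 g) (tailL p21 e21) (tailL p22 e22))
       (pairL (Bool.xor α2 g) (headL p21 (!e21)) (headL p22 (!e22))) ∧
     ReplaceBlock D₂ D₃ (pairL (Bool.xor β1 h) (headL p11 e11) (headL p21 e21))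
       (pairL (Bool.xor β1 h) (tailL p11 (!e11)) (tailL p21 (!e21))) ∧
     ReplaceBlock D₃ D' (pairL (Bool.xor β2 h) (headL p12 e12) (headL p22 e22))
       (pairL (Bool.xor β2 h) (tailL p12 (!e12)) (tailL p22 (!e22))))

/-- wBP (welded band-pass move): the welded analogue of the band-pass move, in
which one band crosses the other once classically and once virtually.  On Gauss
diagrams it has the same shape as `BP` on four arrows, except that the sign
restrictions are released (signs `sᵢⱼ` and orders `o₁,…,o₄` are free) and that
the distinguished arrow `p22` keeps its sign (it undergoes a `VC` move) while
the three others undergo crossing changes. -/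
def IsWBP (D D' : GaussD n) : Prop :=
  ∃ (p11 p12 p21 p22 : ℕ) (s11 s12 s21 s22 o1 o2 o3 o4 : Bool)
    (D₁ D₂ D₃ : GaussD n),
    p11 ≠ p12 ∧ p11 ≠ p21 ∧ p11 ≠ p22 ∧ p12 ≠ p21 ∧ p12 ≠ p22 ∧ p21 ≠ p22 ∧
    ReplaceBlock D D₁ (pairL o1 (tailL p11 s11) (tailL p12 s12))
      (pairL o1 (headL p11 (!s11)) (headL p12 (!s12))) ∧
    ReplaceBlock D₁ D₂ (pairL o2 (tailL p21 s21) (tailL p22 s22))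
      (pairL o2 (headL p21 (!s21)) (headL p22 s22)) ∧
    ReplaceBlock D₂ D₃ (pairL o3 (headL p11 s11) (headL p21 s21))
      (pairL o3 (tailL p11 (!s11)) (tailL p21 (!s21))) ∧
    ReplaceBlock D₃ D' (pairL o4 (headL p12 s12) (headL p22 s22))
      (pairL o4 (tailL p12 (!s12)) (tailL p22 s22))

/-- Rotation of a circular strand: for Gauss diagrams over *circles* (links),
the word of each component is only defined up to cyclic permutation. -/
def IsRot (D D' : GaussD n) : Prop :=
  ∃ (i : Fin n) (x : Letter) (u : List Letter),
    D i = x :: u ∧ D' i = u ++ [x] ∧ ∀ j, j ≠ i → D' j = D j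

end GaussD
namespace GaussD

variable {n : ℕ}

/-! ## Virtual linking numbers -/

/-- The sign of a letter, as an integer. -/
def sgnZ (b : Bool) : ℤ := if b then 1 else -1

/-- The virtual linking number `vlk i j`: the sum of the signs of the arrows
with tail on strand `i` and head on strand `j` (for `i ≠ j`, the number, with
signs, of crossings where strand `i` overpasses strand `j`). -/
def vlk (D : GaussD n) (i j : Fin n) : ℤ :=
  (((D j).filter (fun l => l.isHead && decide (Letter.mk l.id false l.sign ∈ D i))).map
    (fun l => sgnZ l.sign)).sum

/-- `vlk i * = Σ_{k ≠ i} vlk i k`. -/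
def vlkStar (D : GaussD n) (i : Fin n) : ℤ :=
  ∑ j ∈ Finset.univ.erase i, vlk D i j

/-- An upper bound for the identifiers used in `D`. -/
def maxIdOf (D : GaussD n) : ℕ := ((lettersOf D).map Letter.id).foldr max 0

/-- Shift all identifiers by `k`. -/
def shiftD (k : ℕ) (D : GaussD n) : GaussD n :=
  fun i => (D i).map (fun l => Letter.mk (l.id + k) l.isHead l.sign)

/-- The stacking product of Gauss diagrams (`D` below, `E` above), which induces
the monoid structure on welded string links. -/
def stack (D E : GaussD n) : GaussD n :=
  fun i => D i ++ shiftD (maxIdOf D + 1) E i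

/-- The trivial (empty) diagram. -/
def trivialD : GaussD n := fun _ => []

/-! ## Realizability (classicality)

A virtual (string link) diagram is classical when it has no virtual crossing;
correspondingly a Gauss diagram is *realizable* when it is the Gauss diagram of
a planar diagram.  Realizability is expressed combinatorially: the signed Gauss
data determines a ribbon graph (crossings are 4-valent vertices whose cyclic
order of incident edge-ends is dictated by the signs, and, for string links,
the boundary of the square is added to the graph); the diagram is realizable
exactly when this ribbon graph has genus `0`, which is detected by counting the
faces (orbits of the face-tracing permutation on darts) via the Euler formula.
-/

/-- A dart (edge-end) of the ribbon graph associated with a Gauss diagram: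
`strand i s e` is an end of the `s`-th segment of strand `i`, `bdry j e` an end
of the `j`-th boundary segment. -/
inductive Dart (n : ℕ) where
  | strand (i : Fin n) (s : ℕ) (e : Bool)
  | bdry (j : ℕ) (e : Bool)
deriving DecidableEq, Repr

/-- The opposite end of the same edge. -/
def dartFlip : Dart n → Dart n
  | .strand i s e => .strand i s (!e)
  | .bdry j e => .bdry j (!e)

/-- Index of the first occurrence of `p`. -/
def idxOfD {α : Type*} [DecidableEq α] (p : α) : List α → ℕ
  | [] => 0
  | x :: xs => if x = p then 0 else idxOfD p xs + 1

/-- Successor of `d` in the rotation system given by the list of cycles. -/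
def cycNext {α : Type*} [DecidableEq α] (cycles : List (List α)) (d : α) : α :=
  match cycles.find? (fun c => decide (d ∈ c)) with
  | some c => c.getD ((idxOfD d c + 1) % c.length) d
  | none => d

/-- Position of the letter `p` in `D`. -/
def posOf (D : GaussD n) (p : Letter) : Option (Fin n × ℕ) :=
  ((List.finRange n).filterMap (fun i =>
    if p ∈ D i then some (i, idxOfD p (D i)) else none)).head?

/-- The rotation cycles at the crossings (counterclockwise order of the four
darts around each crossing, dictated by the sign of the crossing), for
diagrams over intervals. -/
def crossingCycles (D : GaussD n) : List (List (Dart n)) :=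
  (List.finRange n).foldr (fun i acc =>
    ((List.range (D i).length).filterMap (fun k =>
      match (D i)[k]? with
      | some l =>
        if l.isHead then none
        else match posOf D (Letter.mk l.id true l.sign) with
          | some (j, m) =>
            some (if l.sign then
              [Dart.strand i (k+1) false, Dart.strand j (m+1) false,
               Dart.strand i k true, Dart.strand j m true]
            else
              [Dart.strand i (k+1) false, Dart.strand j m true,
               Dart.strand i k true, Dart.strand j (m+1) false])
          | none => none
      | none => none)) ++ acc) []

/-- The rotation cycles at the `2n` points where the strands meet the boundary
of the square, the boundary being part of the graph (boundary segment `j` joins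
boundary vertex `j` to boundary vertex `j+1`, the vertices `0,…,n-1` being the
bottom ends of the strands and `n,…,2n-1` the top ends, in reversed order). -/
def bdryCycles (D : GaussD n) : List (List (Dart n)) :=
  ((List.finRange n).map (fun i =>
    [Dart.bdry i.val false, Dart.strand i 0 false,
     Dart.bdry ((i.val + 2*n - 1) % (2*n)) true])) ++
  ((List.finRange n).map (fun i =>
    [Dart.bdry (2*n - 2 - i.val) true, Dart.bdry (2*n - 1 - i.val) false,
     Dart.strand i (D i).length true]))

/-- All darts, for diagrams over intervals. -/
def allDartsS (D : GaussD n) : List (Dart n) :=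
  ((List.finRange n).foldr (fun i acc =>
    ((List.range ((D i).length + 1)).foldr (fun s acc' =>
      Dart.strand i s false :: Dart.strand i s true :: acc') []) ++ acc) []) ++
  ((List.range (2*n)).foldr (fun j acc =>
    Dart.bdry j false :: Dart.bdry j true :: acc) [])

/-- Number of orbits of `f` on the list (auxiliary, fuelled). -/
def orbitCountAux {α : Type*} [DecidableEq α] (f : α → α) (N : ℕ) :
    ℕ → List α → ℕ
  | _, [] => 0
  | 0, _ :: _ => 0
  | fuel+1, x :: xs =>
      let orb := (List.range N).map (fun k => f^[k] x)
      orbitCountAux f N fuel (xs.filter (fun y => !(decide (y ∈ orb)))) + 1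

/-- Number of orbits of the permutation `f` on the elements of `l`. -/
def orbitCount {α : Type*} [DecidableEq α] (f : α → α) (l : List α) : ℕ :=
  orbitCountAux f l.length l.length l

/-- The number of arrows of a diagram. -/
def numArrows (D : GaussD n) : ℕ :=
  ((List.finRange n).foldr (fun i acc => (D i).length + acc) 0) / 2

/-- Realizability (= classicality) for Gauss diagrams over intervals: the
diagram is well-formed and its ribbon graph (with the square's boundary) has
genus `0`; by the Euler formula, with `V = numArrows + 2n` vertices and
`E = 2·numArrows + 3n` edges, this amounts to having `numArrows + n + 2`
faces.  Realizable Gauss diagrams are exactly those of classical (planar)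
string link diagrams. -/
def RealizableS (D : GaussD n) : Prop :=
  Wf D ∧
  orbitCount (fun d => cycNext (crossingCycles D ++ bdryCycles D) (dartFlip d))
    (allDartsS D) = numArrows D + n + 2

/-- The rotation cycles at the crossings, for diagrams over circles. -/
def crossingCyclesL (D : GaussD n) : List (List (Dart n)) :=
  (List.finRange n).foldr (fun i acc =>
    ((List.range (D i).length).filterMap (fun k =>
      match (D i)[k]? with
      | some l =>
        if l.isHead then none
        else match posOf D (Letter.mk l.id true l.sign) with
          | some (j, m) =>
            some (if l.sign then
              [Dart.strand i ((k+1) % (D i).length) false,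
               Dart.strand j ((m+1) % (D j).length) false,
               Dart.strand i k true, Dart.strand j m true]
            else
              [Dart.strand i ((k+1) % (D i).length) false, Dart.strand j m true,
               Dart.strand i k true, Dart.strand j ((m+1) % (D j).length) false])
          | none => none
      | none => none)) ++ acc) []

/-- All darts, for diagrams over circles. -/
def allDartsL (D : GaussD n) : List (Dart n) :=
  (List.finRange n).foldr (fun i acc =>
    ((List.range (D i).length).foldr (fun s acc' =>
      Dart.strand i s false :: Dart.strand i s true :: acc') []) ++ acc) []

/-- Two strands are adjacent when some arrow has an endpoint on each. -/
def strandAdjB (D : GaussD n) (i j : Fin n) : Bool :=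
  (D i).any (fun l => (D j).any (fun l' => l.id == l'.id))

/-- One-step reachability expansion among strands. -/
def reachStep (D : GaussD n) (s : List (Fin n)) : List (Fin n) :=
  (List.finRange n).filter (fun j =>
    decide (j ∈ s) || s.any (fun i' => strandAdjB D i' j))

/-- The number of connected components of the underlying curve arrangement. -/
def compCount (D : GaussD n) : ℕ :=
  (List.finRange n).countP (fun i =>
    (((reachStep D)^[n] [i]).filter (fun j => decide (j < i))).isEmpty)

/-- The number of crossing-free components. -/
def emptyStrands (D : GaussD n) : ℕ :=
  (List.finRange n).countP (fun i => (D i).isEmpty)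

/-- Realizability (= classicality) for Gauss diagrams over circles (links),
again via the genus-`0` condition for the associated ribbon graph, by the
Euler formula for a possibly disconnected graph embedded in the sphere. -/
def RealizableL (D : GaussD n) : Prop :=
  Wf D ∧
  ((if (allDartsL D).isEmpty then 1
    else orbitCount (fun d => cycNext (crossingCyclesL D) (dartFlip d))
      (allDartsL D)) + emptyStrands D = 1 + compCount D + numArrows D)

/-! ## Equivalence relations generated by moves -/

/-- The empty set of extra moves. -/
def NoMove : GaussD n → GaussD n → Prop := fun _ _ => False

/-- Equivalence of Gauss diagrams over intervals (welded string links) under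
welded Reidemeister moves together with the extra local move `μ`. -/
def WEq (μ : GaussD n → GaussD n → Prop) (D D' : GaussD n) : Prop :=
  Relation.EqvGen (fun X Y => WeldedMove X Y ∨ μ X Y) D D'

/-- Equivalence of Gauss diagrams over circles (welded links) under welded
Reidemeister moves, rotations, and the extra local move `μ`. -/
def LEq (μ : GaussD n → GaussD n → Prop) (D D' : GaussD n) : Prop :=
  Relation.EqvGen (fun X Y => WeldedMove X Y ∨ IsRot X Y ∨ μ X Y) D D'

/-- A classical Reidemeister move (on realizable diagrams): renaming, R1, R2 or R3. -/
def ClassicalMove (D D' : GaussD n) : Prop :=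
  Rename D D' ∨ IsR1 D D' ∨ IsR2 D D' ∨ IsR3 D D'

/-- Equivalence of classical (realizable) Gauss diagrams over intervals under
classical Reidemeister moves and the extra classical local move `μ`, all
diagrams along the way being classical. -/
def CEq (μ : GaussD n → GaussD n → Prop) (D D' : GaussD n) : Prop :=
  Relation.EqvGen (fun X Y =>
    (ClassicalMove X Y ∨ μ X Y) ∧ RealizableS X ∧ RealizableS Y) D D'

/-- Equivalence of classical Gauss diagrams over circles under classical
Reidemeister moves, rotations and the extra classical local move `μ`. -/
def CLEq (μ : GaussD n → GaussD n → Prop) (D D' : GaussD n) : Prop :=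
  Relation.EqvGen (fun X Y =>
    (ClassicalMove X Y ∨ IsRot X Y ∨ μ X Y) ∧ RealizableL X ∧ RealizableL Y) D D'

/-- `M₂` w-generates `M₁`: every instance of `M₁` can be realized by a finite
sequence of `M₂` moves and welded Reidemeister moves. -/
def WGen (M₂ M₁ : GaussD n → GaussD n → Prop) : Prop :=
  ∀ D D', M₁ D D' → WEq M₂ D D'

/-- `M₂` c-generates `M₁` (for classical local moves, on classical diagrams):
every instance of `M₁` between classical diagrams can be realized by a finite
sequence of `M₂` moves and classical Reidemeister moves. -/
def CGen (M₂ M₁ : GaussD n → GaussD n → Prop) : Prop :=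
  ∀ D D', RealizableS D → RealizableS D' → M₁ D D' → CEq M₂ D D'

end GaussD

/-!
A sign reversal of an arrow `a` is a crossing change of `a` followed by a virtual conjugation.
In a wBP move the arrows `p11`, `p12`, `p21` undergo crossing changes and `p22` a virtual
conjugation, so `a` is made to play `p21` in one wBP move and `p22` in a second one. The other
arrows of these two moves are auxiliary: kinks created by R1 and the two arrows of an R2 pair,
brought next to `a` by OC moves. Crossing changes and virtual conjugations keep a kink a kink, and
each arrow of the R2 pair undergoes exactly one crossing change, so the pair keeps opposite signs;
hence all auxiliary arrows can be deleted again by R1 and R2.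
-/

namespace GaussD

variable {n : ℕ}

lemma mem_lettersOf {D : GaussD n} {l : Letter} : l ∈ lettersOf D ↔ ∃ i, l ∈ D i := by
  simp [lettersOf]

lemma id_le_maxIdOf {D : GaussD n} {l : Letter} (h : l ∈ lettersOf D) : l.id ≤ maxIdOf D :=
  List.le_max_of_le' 0 (List.mem_map_of_mem h) le_rfl

lemma DelTwoBlocks.symm {D D' : GaussD n} {p q : List Letter} (h : DelTwoBlocks D D' p q) :
    DelTwoBlocks D D' q p := by
  rcases h with ⟨i, u, v, w, hD, hD', hoff⟩ |
    ⟨i, j, hij, u, v, u', v', hi, hi', hj, hj', hoff⟩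
  · exact Or.inl ⟨i, u, v, w, hD.symm, hD', hoff⟩
  · exact Or.inr ⟨j, i, hij.symm, u', v', u, v, hj, hj', hi, hi',
      fun k hkj hki => hoff k hki hkj⟩

namespace WEq

variable {μ : GaussD n → GaussD n → Prop} {D D' D'' : GaussD n}

lemma of_weldedMove (h : WeldedMove D D') : WEq μ D D' := .rel _ _ (Or.inl h)

lemma of_move (h : μ D D') : WEq μ D D' := .rel _ _ (Or.inr h)

lemma symm (h : WEq μ D D') : WEq μ D' D := Relation.EqvGen.symm _ _ h

lemma trans (h : WEq μ D D') (h' : WEq μ D' D'') : WEq μ D D'' :=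
  Relation.EqvGen.trans _ _ _ h h'

instance : Trans (WEq μ) (WEq μ) (WEq (n := n) μ) := ⟨trans⟩

end WEq

/-- A Gauss diagram with two holes (on one strand or on two) into which blocks of letters are
substituted, axiomatized by the properties of substitution that the local moves use. -/
structure TwoHoleContext (n : ℕ) where
  fill : List Letter → List Letter → GaussD n
  replaceBlock_left (p q a₁ a₂ B : List Letter) :
    ReplaceBlock (fill (a₁ ++ p ++ a₂) B) (fill (a₁ ++ q ++ a₂) B) p q
  replaceBlock_right (p q b₁ b₂ A : List Letter) :
    ReplaceBlock (fill A (b₁ ++ p ++ b₂)) (fill A (b₁ ++ q ++ b₂)) p q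
  delTwoBlocks (p q a₁ a₂ b₁ b₂ : List Letter) :
    DelTwoBlocks (fill (a₁ ++ p ++ a₂) (b₁ ++ q ++ b₂))
      (fill (a₁ ++ a₂) (b₁ ++ b₂)) p q
  mem_fill {l : Letter} {A B : List Letter} {k : Fin n} (h : l ∈ fill A B k) :
    l ∈ A ∨ l ∈ B ∨ ∀ A' B', l ∈ fill A' B' k

namespace TwoHoleContext

variable (E : TwoHoleContext n)

def swap : TwoHoleContext n where
  fill A B := E.fill B A
  replaceBlock_left p q a₁ a₂ B := E.replaceBlock_right p q a₁ a₂ B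
  replaceBlock_right p q b₁ b₂ A := E.replaceBlock_left p q b₁ b₂ A
  delTwoBlocks p q a₁ a₂ b₁ b₂ := (E.delTwoBlocks q p b₁ b₂ a₁ a₂).symm
  mem_fill h := by
    rcases E.mem_fill h with h | h | h
    exacts [Or.inr (Or.inl h), Or.inl h, Or.inr (Or.inr fun A' B' => h B' A')]

lemma mem_lettersOf_fill_of_mem_nil {l : Letter} (h : l ∈ lettersOf (E.fill [] []))
    (A B : List Letter) : l ∈ lettersOf (E.fill A B) := by
  obtain ⟨k, hk⟩ := mem_lettersOf.1 h
  rcases E.mem_fill hk with h | h | h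
  exacts [absurd h List.not_mem_nil, absurd h List.not_mem_nil, mem_lettersOf.2 ⟨k, h A B⟩]

lemma not_usesId_fill {M : ℕ} (hM : ∀ l ∈ lettersOf (E.fill [] []), l.id ≤ M)
    {x : ℕ} (hx : M < x)
    {A B : List Letter} (hAB : ∀ l ∈ A ++ B, l.id ≠ x) : ¬ usesId (E.fill A B) x := by
  rintro ⟨l, hl, rfl⟩
  obtain ⟨k, hk⟩ := mem_lettersOf.1 hl
  rcases E.mem_fill hk with h | h | h
  · exact hAB l (List.mem_append_left _ h) rfl
  · exact hAB l (List.mem_append_right _ h) rfl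
  · exact absurd (hM l (mem_lettersOf.2 ⟨k, h [] []⟩)) (by omega)

variable {μ : GaussD n → GaussD n → Prop}

lemma weq_r1_left (o s : Bool) (a₁ a₂ B : List Letter) {x : ℕ}
    (hx : ¬ usesId (E.fill (a₁ ++ a₂) B) x) :
    WEq μ (E.fill (a₁ ++ pairL o (headL x s) (tailL x s) ++ a₂) B) (E.fill (a₁ ++ a₂) B) :=
  .of_weldedMove <| Or.inr <| Or.inl
    ⟨x, s, o, by simpa using E.replaceBlock_left (pairL o (headL x s) (tailL x s)) [] a₁ a₂ B,
      hx⟩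

lemma weq_r1_right (o s : Bool) (b₁ b₂ A : List Letter) {x : ℕ}
    (hx : ¬ usesId (E.fill A (b₁ ++ b₂)) x) :
    WEq μ (E.fill A (b₁ ++ pairL o (headL x s) (tailL x s) ++ b₂)) (E.fill A (b₁ ++ b₂)) :=
  E.swap.weq_r1_left o s b₁ b₂ A hx

lemma weq_oc_left (x : ℕ) (s : Bool) (y : ℕ) (t : Bool) (a₁ a₂ B : List Letter) :
    WEq μ (E.fill (a₁ ++ [tailL x s, tailL y t] ++ a₂) B)
      (E.fill (a₁ ++ [tailL y t, tailL x s] ++ a₂) B) :=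
  .of_weldedMove <| Or.inr <| Or.inr <| Or.inr <| Or.inr
    ⟨tailL x s, tailL y t, rfl, rfl, E.replaceBlock_left _ _ a₁ a₂ B⟩

lemma weq_oc_right (x : ℕ) (s : Bool) (y : ℕ) (t : Bool) (b₁ b₂ A : List Letter) :
    WEq μ (E.fill A (b₁ ++ [tailL x s, tailL y t] ++ b₂))
      (E.fill A (b₁ ++ [tailL y t, tailL x s] ++ b₂)) :=
  E.swap.weq_oc_left x s y t b₁ b₂ A

lemma weq_r2 (ε o₁ o₂ : Bool) (a₁ a₂ b₁ b₂ : List Letter) {x y : ℕ} (hxy : x ≠ y)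
    (hx : ¬ usesId (E.fill (a₁ ++ a₂) (b₁ ++ b₂)) x)
    (hy : ¬ usesId (E.fill (a₁ ++ a₂) (b₁ ++ b₂)) y) :
    WEq μ (E.fill (a₁ ++ pairL o₁ (tailL x ε) (tailL y (!ε)) ++ a₂)
        (b₁ ++ pairL o₂ (headL x ε) (headL y (!ε)) ++ b₂))
      (E.fill (a₁ ++ a₂) (b₁ ++ b₂)) :=
  .of_weldedMove <| Or.inr <| Or.inr <| Or.inl
    ⟨x, y, ε, o₁, o₂, hxy, hx, hy, E.delTwoBlocks _ _ a₁ a₂ b₁ b₂⟩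

def ofStrand (D : GaussD n) (i : Fin n) (u v w : List Letter) : TwoHoleContext n where
  fill A B := Function.update D i (u ++ A ++ v ++ B ++ w)
  replaceBlock_left p q a₁ a₂ B :=
    ⟨i, u ++ a₁, a₂ ++ v ++ B ++ w, by simp, by simp,
      fun k hk => by simp only [Function.update_of_ne hk]⟩
  replaceBlock_right p q b₁ b₂ A :=
    ⟨i, u ++ A ++ v ++ b₁, b₂ ++ w, by simp, by simp,
      fun k hk => by simp only [Function.update_of_ne hk]⟩
  delTwoBlocks p q a₁ a₂ b₁ b₂ :=
    Or.inl ⟨i, u ++ a₁, a₂ ++ v ++ b₁, b₂ ++ w, Or.inl (by simp), by simp,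
      fun k hk => by simp only [Function.update_of_ne hk]⟩
  mem_fill {l A B k} h := by
    rcases eq_or_ne k i with rfl | hk
    · simp only [Function.update_self, List.mem_append] at h ⊢
      tauto
    · simp only [Function.update_of_ne hk] at h ⊢
      exact Or.inr (Or.inr fun _ _ => h)

def ofStrands (D : GaussD n) {i j : Fin n} (hij : i ≠ j) (u v u' v' : List Letter) :
    TwoHoleContext n where
  fill A B := Function.update (Function.update D i (u ++ A ++ v)) j (u' ++ B ++ v')
  replaceBlock_left p q a₁ a₂ B :=
    ⟨i, u ++ a₁, a₂ ++ v, by simp [Function.update_of_ne hij],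
      by simp [Function.update_of_ne hij],
      fun k hk => by
        rcases eq_or_ne k j with rfl | hkj
        · simp
        · simp only [Function.update_of_ne hkj, Function.update_of_ne hk]⟩
  replaceBlock_right p q b₁ b₂ A :=
    ⟨j, u' ++ b₁, b₂ ++ v', by simp, by simp,
      fun k hk => by simp only [Function.update_of_ne hk]⟩
  delTwoBlocks p q a₁ a₂ b₁ b₂ :=
    Or.inr ⟨i, j, hij, u ++ a₁, a₂ ++ v, u' ++ b₁, b₂ ++ v',
      by simp [Function.update_of_ne hij], by simp [Function.update_of_ne hij], by simp, by simp,
      fun k hki hkj => by simp only [Function.update_of_ne hki, Function.update_of_ne hkj]⟩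
  mem_fill {l A B k} h := by
    rcases eq_or_ne k j with rfl | hkj
    · simp only [Function.update_self, List.mem_append] at h ⊢
      tauto
    rcases eq_or_ne k i with rfl | hki
    · simp only [Function.update_of_ne hkj, Function.update_self, List.mem_append] at h ⊢
      tauto
    · simp only [Function.update_of_ne hkj, Function.update_of_ne hki] at h ⊢
      exact Or.inr (Or.inr fun _ _ => h)

local infix:50 " ≈ʷ " => WEq IsWBP

section Chain

variable (a : ℕ) {M : ℕ} (ha : a ≤ M) (hM : ∀ l ∈ lettersOf (E.fill [] []), l.id ≤ M)
include ha hM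

theorem weq_isWBP_crossingChange (ε : Bool) :
    E.fill [tailL (M+2) true, tailL (M+4) false, headL a ε]
        [tailL a ε, headL (M+2) true, headL (M+4) false] ≈ʷ
      E.fill [headL (M+2) false, tailL (M+4) false, tailL a (!ε)]
        [headL a (!ε), tailL (M+2) false, headL (M+4) false] := by
  calc E.fill [tailL (M+2) true, tailL (M+4) false, headL a ε]
        [tailL a ε, headL (M+2) true, headL (M+4) false]
    _ ≈ʷ E.fill [tailL (M+2) true, tailL (M+4) false, tailL (M+1) true, headL (M+1) true,
            headL a ε]
          [tailL a ε, headL (M+2) true, headL (M+4) false] :=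
      (E.weq_r1_left false true [tailL (M+2) true, tailL (M+4) false] [headL a ε] _
        (E.not_usesId_fill hM (by omega) (by simp [headL, tailL]; omega))).symm
    _ ≈ʷ E.fill [tailL (M+2) true, tailL (M+1) true, tailL (M+4) false, headL (M+1) true,
            headL a ε]
          [tailL a ε, headL (M+2) true, headL (M+4) false] :=
      E.weq_oc_left (M+4) false (M+1) true [tailL (M+2) true] [headL (M+1) true, headL a ε] _
    _ ≈ʷ E.fill [tailL (M+2) true, tailL (M+1) true, tailL (M+4) false, headL (M+1) true,
            headL a ε]
          [tailL a ε, tailL (M+3) true, headL (M+3) true, headL (M+2) true, headL (M+4) false] :=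
      (E.weq_r1_right false true [tailL a ε] [headL (M+2) true, headL (M+4) false] _
        (E.not_usesId_fill hM (by omega) (by simp [headL, tailL]; omega))).symm
    -- `a` plays `p21`
    _ ≈ʷ E.fill [headL (M+2) false, headL (M+1) false, tailL (M+4) false, tailL (M+1) false,
            tailL a (!ε)]
          [headL a (!ε), headL (M+3) true, tailL (M+3) true, tailL (M+2) false,
            headL (M+4) false] :=
      .of_move ⟨M+1, M+2, a, M+3, true, true, ε, true, false, true, true, false, _, _, _,
        by omega, by omega, by omega, by omega, by omega, by omega,
        E.replaceBlock_left [tailL (M+2) true, tailL (M+1) true]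
          [headL (M+2) false, headL (M+1) false] []
          [tailL (M+4) false, headL (M+1) true, headL a ε]
          [tailL a ε, tailL (M+3) true, headL (M+3) true, headL (M+2) true, headL (M+4) false],
        E.replaceBlock_right [tailL a ε, tailL (M+3) true] [headL a (!ε), headL (M+3) true] []
          [headL (M+3) true, headL (M+2) true, headL (M+4) false]
          [headL (M+2) false, headL (M+1) false, tailL (M+4) false, headL (M+1) true, headL a ε],
        E.replaceBlock_left [headL (M+1) true, headL a ε] [tailL (M+1) false, tailL a (!ε)]
          [headL (M+2) false, headL (M+1) false, tailL (M+4) false] []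
          [headL a (!ε), headL (M+3) true, headL (M+3) true, headL (M+2) true, headL (M+4) false],
        E.replaceBlock_right [headL (M+3) true, headL (M+2) true]
          [tailL (M+3) true, tailL (M+2) false]
          [headL a (!ε), headL (M+3) true] [headL (M+4) false]
          [headL (M+2) false, headL (M+1) false, tailL (M+4) false, tailL (M+1) false,
            tailL a (!ε)]⟩
    _ ≈ʷ E.fill [headL (M+2) false, headL (M+1) false, tailL (M+1) false, tailL (M+4) false,
            tailL a (!ε)]
          [headL a (!ε), headL (M+3) true, tailL (M+3) true, tailL (M+2) false,
            headL (M+4) false] :=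
      E.weq_oc_left (M+4) false (M+1) false [headL (M+2) false, headL (M+1) false] [tailL a (!ε)] _
    _ ≈ʷ E.fill [headL (M+2) false, tailL (M+4) false, tailL a (!ε)]
          [headL a (!ε), headL (M+3) true, tailL (M+3) true, tailL (M+2) false,
            headL (M+4) false] :=
      E.weq_r1_left true false [headL (M+2) false] [tailL (M+4) false, tailL a (!ε)] _
        (E.not_usesId_fill hM (by omega) (by simp [headL, tailL]; omega))
    _ ≈ʷ E.fill [headL (M+2) false, tailL (M+4) false, tailL a (!ε)]
          [headL a (!ε), tailL (M+2) false, headL (M+4) false] :=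
      E.weq_r1_right true true [headL a (!ε)] [tailL (M+2) false, headL (M+4) false] _
        (E.not_usesId_fill hM (by omega) (by simp [headL, tailL]; omega))

theorem weq_isWBP_virtualConjugation (δ : Bool) :
    E.fill [headL (M+2) false, tailL (M+4) false, tailL a δ]
        [headL a δ, tailL (M+2) false, headL (M+4) false] ≈ʷ
      E.fill [headL (M+2) false, headL (M+4) true, headL a δ]
        [tailL a δ, tailL (M+2) false, tailL (M+4) true] := by
  calc E.fill [headL (M+2) false, tailL (M+4) false, tailL a δ]
        [headL a δ, tailL (M+2) false, headL (M+4) false]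
    _ ≈ʷ E.fill [headL (M+2) false, tailL (M+4) false, tailL a δ]
          [headL a δ, tailL (M+2) false, tailL (M+5) true, headL (M+5) true, headL (M+4) false] :=
      (E.weq_r1_right false true [headL a δ, tailL (M+2) false] [headL (M+4) false] _
        (E.not_usesId_fill hM (by omega) (by simp [headL, tailL]; omega))).symm
    _ ≈ʷ E.fill [headL (M+2) false, tailL (M+4) false, tailL a δ]
          [headL a δ, headL (M+6) true, tailL (M+6) true, tailL (M+2) false, tailL (M+5) true,
            headL (M+5) true, headL (M+4) false] :=
      (E.weq_r1_right true true [headL a δ]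
        [tailL (M+2) false, tailL (M+5) true, headL (M+5) true, headL (M+4) false] _
        (E.not_usesId_fill hM (by omega) (by simp [headL, tailL]; omega))).symm
    _ ≈ʷ E.fill [headL (M+2) false, tailL (M+4) false, tailL a δ]
          [headL a δ, headL (M+6) true, tailL (M+2) false, tailL (M+6) true, tailL (M+5) true,
            headL (M+5) true, headL (M+4) false] :=
      E.weq_oc_right (M+6) true (M+2) false [headL a δ, headL (M+6) true]
        [tailL (M+5) true, headL (M+5) true, headL (M+4) false] _
    -- `a` plays `p22`
    _ ≈ʷ E.fill [headL (M+2) false, headL (M+4) true, headL a δ]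
          [tailL a δ, tailL (M+6) false, tailL (M+2) false, headL (M+6) false, headL (M+5) false,
            tailL (M+5) false, tailL (M+4) true] :=
      .of_move ⟨M+5, M+6, M+4, a, true, true, false, δ, false, true, true, false, _, _, _,
        by omega, by omega, by omega, by omega, by omega, by omega,
        E.replaceBlock_right [tailL (M+6) true, tailL (M+5) true]
          [headL (M+6) false, headL (M+5) false]
          [headL a δ, headL (M+6) true, tailL (M+2) false] [headL (M+5) true, headL (M+4) false]
          [headL (M+2) false, tailL (M+4) false, tailL a δ],
        E.replaceBlock_left [tailL (M+4) false, tailL a δ] [headL (M+4) true, headL a δ]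
          [headL (M+2) false] []
          [headL a δ, headL (M+6) true, tailL (M+2) false, headL (M+6) false, headL (M+5) false,
            headL (M+5) true, headL (M+4) false],
        E.replaceBlock_right [headL (M+5) true, headL (M+4) false]
          [tailL (M+5) false, tailL (M+4) true]
          [headL a δ, headL (M+6) true, tailL (M+2) false, headL (M+6) false, headL (M+5) false] []
          [headL (M+2) false, headL (M+4) true, headL a δ],
        E.replaceBlock_right [headL a δ, headL (M+6) true] [tailL a δ, tailL (M+6) false] []
          [tailL (M+2) false, headL (M+6) false, headL (M+5) false, tailL (M+5) false,
            tailL (M+4) true]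
          [headL (M+2) false, headL (M+4) true, headL a δ]⟩
    _ ≈ʷ E.fill [headL (M+2) false, headL (M+4) true, headL a δ]
          [tailL a δ, tailL (M+6) false, tailL (M+2) false, headL (M+6) false, tailL (M+4) true] :=
      E.weq_r1_right true false
        [tailL a δ, tailL (M+6) false, tailL (M+2) false, headL (M+6) false] [tailL (M+4) true] _
        (E.not_usesId_fill hM (by omega) (by simp [headL, tailL]; omega))
    _ ≈ʷ E.fill [headL (M+2) false, headL (M+4) true, headL a δ]
          [tailL a δ, tailL (M+2) false, tailL (M+6) false, headL (M+6) false, tailL (M+4) true] :=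
      E.weq_oc_right (M+6) false (M+2) false [tailL a δ] [headL (M+6) false, tailL (M+4) true] _
    _ ≈ʷ E.fill [headL (M+2) false, headL (M+4) true, headL a δ]
          [tailL a δ, tailL (M+2) false, tailL (M+4) true] :=
      E.weq_r1_right false false [tailL a δ, tailL (M+2) false] [tailL (M+4) true] _
        (E.not_usesId_fill hM (by omega) (by simp [headL, tailL]; omega))

theorem weq_isWBP_reverseSign (ε : Bool) :
    E.fill [headL a ε] [tailL a ε] ≈ʷ E.fill [headL a (!ε)] [tailL a (!ε)] := by
  calc E.fill [headL a ε] [tailL a ε]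
    _ ≈ʷ E.fill [tailL (M+2) true, tailL (M+4) false, headL a ε]
          [tailL a ε, headL (M+2) true, headL (M+4) false] :=
      (E.weq_r2 true true true [] [headL a ε] [tailL a ε] [] (by omega)
        (E.not_usesId_fill hM (by omega) (by simp [headL, tailL]; omega))
        (E.not_usesId_fill hM (by omega) (by simp [headL, tailL]; omega))).symm
    _ ≈ʷ E.fill [headL (M+2) false, tailL (M+4) false, tailL a (!ε)]
          [headL a (!ε), tailL (M+2) false, headL (M+4) false] :=
      E.weq_isWBP_crossingChange a ha hM ε
    _ ≈ʷ E.fill [headL (M+2) false, headL (M+4) true, headL a (!ε)]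
          [tailL a (!ε), tailL (M+2) false, tailL (M+4) true] :=
      E.weq_isWBP_virtualConjugation a ha hM (!ε)
    _ ≈ʷ E.fill [headL a (!ε)] [tailL a (!ε)] :=
      E.swap.weq_r2 false true true [tailL a (!ε)] [] [] [headL a (!ε)] (by omega)
        (E.not_usesId_fill hM (by omega) (by simp [headL, tailL]; omega))
        (E.not_usesId_fill hM (by omega) (by simp [headL, tailL]; omega))

end Chain

end TwoHoleContext

lemma IsSR.exists_twoHoleContext {D D' : GaussD n} (h : IsSR D D') :
    ∃ (E : TwoHoleContext n) (a : ℕ) (ε : Bool),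
      E.fill [headL a ε] [tailL a ε] = D ∧ E.fill [headL a (!ε)] [tailL a (!ε)] = D' := by
  obtain ⟨a, ε, ⟨i, u, v, w, hcase, hoff⟩ |
    ⟨i, j, hij, u, v, u', v', hi, hi', hj, hj', hoff⟩⟩ := h
  · have fill_eq {D₀ : GaussD n} {A B : List Letter} (hA : D₀ i = u ++ A ++ v ++ B ++ w)
        (hoff : ∀ k, k ≠ i → D₀ k = D k) :
        (TwoHoleContext.ofStrand D i u v w).fill A B = D₀ := by
      funext k
      rcases eq_or_ne k i with rfl | hk
      · simp [TwoHoleContext.ofStrand, hA]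
      · simp [TwoHoleContext.ofStrand, Function.update_of_ne hk, hoff k hk]
    rcases hcase with ⟨hD, hD'⟩ | ⟨hD, hD'⟩
    · exact ⟨.ofStrand D i u v w, a, ε, fill_eq (by simp [hD]) (fun _ _ => rfl),
        fill_eq (by simp [hD']) hoff⟩
    · exact ⟨(TwoHoleContext.ofStrand D i u v w).swap, a, ε,
        fill_eq (by simp [hD]) (fun _ _ => rfl), fill_eq (by simp [hD']) hoff⟩
  · have fill_eq {D₀ : GaussD n} {A B : List Letter} (hA : D₀ i = u ++ A ++ v)
        (hB : D₀ j = u' ++ B ++ v') (hoff : ∀ k, k ≠ i → k ≠ j → D₀ k = D k) :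
        (TwoHoleContext.ofStrands D hij u v u' v').fill A B = D₀ := by
      funext k
      rcases eq_or_ne k j with rfl | hkj
      · simp [TwoHoleContext.ofStrands, hB]
      rcases eq_or_ne k i with rfl | hki
      · simp [TwoHoleContext.ofStrands, Function.update_of_ne hkj, hA]
      · simp [TwoHoleContext.ofStrands, Function.update_of_ne hkj, Function.update_of_ne hki,
          hoff k hki hkj]
    exact ⟨.ofStrands D hij u v u' v', a, ε,
      fill_eq (by simp [hi]) (by simp [hj]) (fun _ _ _ => rfl),
      fill_eq (by simp [hi']) (by simp [hj']) hoff⟩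

end GaussD

open GaussD

/-- **`wBP` w-generates `SR`** (Proposition 2.9): every instance of the
sign-reversal move `SR` can be realized by a finite sequence of welded
band-pass moves `wBP` and welded Reidemeister moves. -/
theorem wBP_wgenerates_SR (n : ℕ) : WGen (n := n) IsWBP IsSR := by
  intro D D' h
  obtain ⟨E, a, ε, rfl, rfl⟩ := h.exists_twoHoleContext
  refine E.weq_isWBP_reverseSign a (M := max a (maxIdOf (E.fill [headL a ε] [tailL a ε])))
    (le_max_left _ _) (fun l hl => ?_) ε
  exact (id_le_maxIdOf (E.mem_lettersOf_fill_of_mem_nil hl _ _)).trans (le_max_right _ _)
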